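/- arXiv:1310.2001 — 2 statements merged into one kernel-verified Lean document; each statement's English description precedes it below -/
import Mathlib

section
/- Let X be a random variable on a countable set 𝒳 with distribution P, let φ be an injective map from 𝒳 into nonempty strings over a size-K alphabet with prefix-free image, let α_c be the cost capacity, and let η > 0 be a threshold. Then for any z > 0, Pr[c(φ(X)) > η] ≥ Pr[P(X) ≤ z·K^{-α_c η}] − z. -/
/-- Additive cost of a string over the code alphabet. -/
noncomputable def strCost {U : Type*} (c : U → ℝ) (s : List U) : ℝ := (s.map c).sum

/-- Probability of a set under a (real-valued) distribution. -/
noncomputable def prob {X : Type*} (P : X → ℝ) (S : Set X) : ℝ := ∑' x, S.indicator P x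

/-!
Only the part of `{P(X) ≤ z K^{-α η}}` where the code is cheap, `c(φ(X)) ≤ η`, has to be
controlled. There `P(x) ≤ z K^{-α η} ≤ z K^{-α c(φ x)}`, so its probability is at most `z` times
the weighted Kraft sum `∑_x K^{-α c(φ x)} = ∑_x ∏_{u ∈ φ x} K^{-α c(u)}`, which is at most `1`
because the image of `φ` is prefix-free and the letter weights `K^{-α c(u)}` sum to `1`.
The weighted Kraft inequality is proved by splitting a prefix-free set of words by first letter.
-/

def IsPrefixFree {U : Type*} (S : Set (List U)) : Prop :=
  ∀ s ∈ S, ∀ t ∈ S, s <+: t → s = t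

namespace IsPrefixFree

variable {U : Type*} {S : Set (List U)}

lemma preimage_cons (hS : IsPrefixFree S) (u : U) : IsPrefixFree ((u :: ·) ⁻¹' S) :=
  fun _ hs _ ht hst => List.cons_injective (hS _ hs _ ht (List.cons_prefix_cons.mpr ⟨rfl, hst⟩))

lemma mono {T : Set (List U)} (hS : IsPrefixFree S) (hTS : T ⊆ S) : IsPrefixFree T :=
  fun s hs t ht => hS s (hTS hs) t (hTS ht)

lemma subset_singleton_nil (hS : IsPrefixFree S) (hnil : [] ∈ S) : S ⊆ {[]} :=
  fun t ht => (hS _ hnil t ht List.nil_prefix).symm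

end IsPrefixFree

lemma sum_prod_map_le_one_of_subset_singleton_nil {U : Type*} {w : U → ℝ} {S : Finset (List U)}
    (hw0 : ∀ u, 0 ≤ w u) (hS : ∀ s ∈ S, s = []) :
    ∑ s ∈ S, (s.map w).prod ≤ 1 := by
  calc ∑ s ∈ S, (s.map w).prod
      ≤ ∑ s ∈ {[]}, (s.map w).prod :=
        Finset.sum_le_sum_of_subset_of_nonneg (fun s hs => Finset.mem_singleton.mpr (hS s hs))
          fun s _ _ => List.prod_nonneg (by simpa using fun u _ => hw0 u)
    _ = 1 := by simp

section Kraft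

variable {U : Type*} [Fintype U]

lemma Finset.sum_filter_ne_nil_eq_sum_sum_cons {M : Type*} [AddCommMonoid M]
    (S : Finset (List U)) (f : List U → M) :
    ∑ s ∈ S with s ≠ [], f s =
      ∑ u, ∑ t ∈ S.preimage (u :: ·) List.cons_injective.injOn, f (u :: t) := by
  rw [Finset.sum_sigma']
  symm
  refine Finset.sum_bij (fun p _ => p.1 :: p.2) ?_ ?_ ?_ (fun _ _ => rfl)
  · intro p hp
    simpa using hp
  · rintro ⟨u, t⟩ - ⟨u', t'⟩ - h
    obtain ⟨rfl, rfl⟩ := List.cons_eq_cons.mp h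
    rfl
  · rintro (_ | ⟨u, t⟩) hs
    · simp at hs
    · exact ⟨⟨u, t⟩, by simpa using hs, rfl⟩

variable {w : U → ℝ}

lemma IsPrefixFree.sum_prod_map_le_one_of_length_le (hw0 : ∀ u, 0 ≤ w u)
    (hw1 : ∑ u, w u ≤ 1) (n : ℕ) {S : Finset (List U)} (hS : IsPrefixFree (S : Set (List U)))
    (hlen : ∀ s ∈ S, s.length ≤ n) :
    ∑ s ∈ S, (s.map w).prod ≤ 1 := by
  induction n generalizing S with
  | zero =>
    refine sum_prod_map_le_one_of_subset_singleton_nil hw0 fun s hs => ?_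
    simpa using hlen s hs
  | succ n ih =>
    by_cases hnil : [] ∈ S
    · exact sum_prod_map_le_one_of_subset_singleton_nil hw0
        fun s hs => hS.subset_singleton_nil hnil hs
    have hT (u : U) : ∑ t ∈ S.preimage (u :: ·) List.cons_injective.injOn, (t.map w).prod ≤ 1 :=
      ih (by simpa using hS.preimage_cons u) fun t ht => by
        simpa using hlen _ (Finset.mem_preimage.mp ht)
    calc ∑ s ∈ S, (s.map w).prod
        = ∑ s ∈ S with s ≠ [], (s.map w).prod := by
          rw [Finset.filter_true_of_mem fun s hs => ne_of_mem_of_not_mem hs hnil]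
      _ = ∑ u, w u * ∑ t ∈ S.preimage (u :: ·) List.cons_injective.injOn, (t.map w).prod := by
          simp [Finset.sum_filter_ne_nil_eq_sum_sum_cons, Finset.mul_sum]
      _ ≤ ∑ u, w u := Finset.sum_le_sum fun u _ => mul_le_of_le_one_right (hw0 u) (hT u)
      _ ≤ 1 := hw1

theorem IsPrefixFree.sum_prod_map_le_one (hw0 : ∀ u, 0 ≤ w u) (hw1 : ∑ u, w u ≤ 1)
    {S : Finset (List U)} (hS : IsPrefixFree (S : Set (List U))) :
    ∑ s ∈ S, (s.map w).prod ≤ 1 :=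
  hS.sum_prod_map_le_one_of_length_le hw0 hw1 _ fun _ => Finset.le_sup

end Kraft

lemma rpow_neg_mul_strCost {U : Type*} {b : ℝ} (hb : 0 < b) (a : ℝ) (c : U → ℝ) (s : List U) :
    b ^ (-(a * strCost c s)) = (s.map fun u => b ^ (-(a * c u))).prod := by
  induction s with
  | nil => simp [strCost]
  | cons u s ih =>
    rw [List.map_cons, List.prod_cons, ← ih, ← Real.rpow_add hb]
    simp only [strCost, List.map_cons, List.sum_cons]
    ring_nf

theorem IsPrefixFree.sum_comp_le_one {U X : Type*} [Fintype U] {w : U → ℝ}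
    (hw0 : ∀ u, 0 ≤ w u) (hw1 : ∑ u, w u ≤ 1) {φ : X → List U} (hinj : Function.Injective φ)
    (hφ : IsPrefixFree (Set.range φ)) (F : Finset X) :
    ∑ x ∈ F, ((φ x).map w).prod ≤ 1 := by
  classical
  rw [← Finset.sum_image (f := fun s => (s.map w).prod) hinj.injOn]
  exact (hφ.mono (by simp)).sum_prod_map_le_one hw0 hw1

lemma prob_le_prob_add_prob_diff {X : Type*} {P : X → ℝ} (hP0 : ∀ x, 0 ≤ P x) (hP : Summable P)
    (A B : Set X) : prob P A ≤ prob P B + prob P (A \ B) := by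
  rw [prob, prob, prob, ← (hP.indicator B).tsum_add (hP.indicator _)]
  refine (hP.indicator A).tsum_le_tsum (fun x => ?_) ((hP.indicator B).add (hP.indicator _))
  by_cases hA : x ∈ A <;> by_cases hB : x ∈ B <;> simp [hA, hB, hP0]

lemma prob_le_of_le_mul {X : Type*} {P q : X → ℝ} {S : Set X} {z : ℝ} (hP0 : ∀ x, 0 ≤ P x)
    (hz : 0 ≤ z) (hq0 : ∀ x, 0 ≤ q x) (hq1 : ∀ F : Finset X, ∑ x ∈ F, q x ≤ 1)
    (hPq : ∀ x ∈ S, P x ≤ z * q x) : prob P S ≤ z := by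
  have hq : Summable q := summable_of_sum_le hq0 hq1
  have hle (x : X) : S.indicator P x ≤ z * q x := by
    by_cases hx : x ∈ S
    · simpa [hx] using hPq x hx
    · simpa [hx] using mul_nonneg hz (hq0 x)
  calc prob P S ≤ ∑' x, z * q x :=
        (hq.mul_left z).of_nonneg_of_le (Set.indicator_nonneg fun x _ => hP0 x) hle
          |>.tsum_le_tsum hle (hq.mul_left z)
    _ = z * ∑' x, q x := hq.tsum_mul_left z
    _ ≤ z := mul_le_of_le_one_right hz (Real.tsum_le_of_sum_le hq0 hq1)

theorem overflow_converse_bound_general {U X : Type*} [Fintype U]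
    (K : ℕ) (hK : 2 ≤ K)
    (c : U → ℝ)
    (α : ℝ) (hα : 0 < α) (hroot : ∑ u : U, (K : ℝ) ^ (-(α * c u)) = 1)
    (P : X → ℝ) (hP0 : ∀ x, 0 ≤ P x) (hP1 : HasSum P 1)
    (φ : X → List U) (hinj : Function.Injective φ)
    (hpf : ∀ x y, φ x <+: φ y → φ x = φ y)
    (η : ℝ) (z : ℝ) (hz : 0 < z) :
    prob P {x | P x ≤ z * (K : ℝ) ^ (-(α * η))} - z ≤ prob P {x | η < strCost c (φ x)} := by
  have hK1 : (1 : ℝ) ≤ K := by exact_mod_cast one_le_two.trans hK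
  have hφ : IsPrefixFree (Set.range φ) := by
    rintro _ ⟨x, rfl⟩ _ ⟨y, rfl⟩ hxy
    exact hpf x y hxy
  have hkraft (F : Finset X) : ∑ x ∈ F, (K : ℝ) ^ (-(α * strCost c (φ x))) ≤ 1 := by
    simp_rw [rpow_neg_mul_strCost (zero_lt_one.trans_le hK1)]
    exact hφ.sum_comp_le_one (fun u => by positivity) hroot.le hinj F
  have hcheap : prob P ({x | P x ≤ z * (K : ℝ) ^ (-(α * η))} \ {x | η < strCost c (φ x)}) ≤ z := by
    refine prob_le_of_le_mul hP0 hz.le (fun x => by positivity) hkraft ?_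
    rintro x ⟨hxA, hxB⟩
    calc P x ≤ z * (K : ℝ) ^ (-(α * η)) := hxA
      _ ≤ z * (K : ℝ) ^ (-(α * strCost c (φ x))) := by
        gcongr
        exact not_lt.mp hxB
  linarith [prob_le_prob_add_prob_diff hP0 hP1.summable {x | P x ≤ z * (K : ℝ) ^ (-(α * η))}
    {x | η < strCost c (φ x)}]

/-- Converse bound (Lemma 2): overflow probability of any prefix-free code is lower
bounded by the information-spectrum tail probability minus `z`. -/
theorem overflow_converse_bound {U X : Type*} [Fintype U] [Countable X]
    (K : ℕ) (hK : 2 ≤ K) (hcard : Fintype.card U = K)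
    (c : U → ℝ) (hc : ∀ u, 0 < c u)
    (α : ℝ) (hα : 0 < α) (hroot : ∑ u : U, (K : ℝ) ^ (-(α * c u)) = 1)
    (P : X → ℝ) (hP0 : ∀ x, 0 ≤ P x) (hP1 : HasSum P 1)
    (φ : X → List U) (hinj : Function.Injective φ) (hne : ∀ x, φ x ≠ [])
    (hpf : ∀ x y, φ x <+: φ y → φ x = φ y)
    (η : ℝ) (hη : 0 < η) (z : ℝ) (hz : 0 < z) :
    prob P {x | P x ≤ z * (K : ℝ) ^ (-(α * η))} - z ≤ prob P {x | η < strCost c (φ x)} :=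
  overflow_converse_bound_general K hK c α hα hroot P hP0 hP1 φ hinj hpf η z hz
end

section
/- For a general source X and 0 ≤ ε < 1, the infimum R(ε|X) of ε-achievable first-order overflow thresholds (R such that there exist prefix-free encoders φ_n with limsup_n Pr[c(φ_n(X^n)) > nR] ≤ ε) equals inf{ R : F(R) ≤ ε }, where F(R) = limsup_{n→∞} Pr[ (1/(n α_c)) log_K (1/P_{X^n}(X^n)) ≥ R ]. -/
/-!
By arithmetic coding with letter probabilities `q u = K ^ (-α c u)` (they sum to one by the choice
of `α`), a word `s` over `U` codes a subinterval of `[0, 1)` of length `K ^ (-α c(s))`, and words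
none of which is a prefix of another code disjoint intervals. Packing these intervals into `[0, 1)`
gives Kraft's inequality `∑ₓ K ^ (-α c(φ x)) ≤ 1` for prefix-free codes, hence
`Pr[P(x) ≤ K ^ (-nα(R + γ)), c(φ x) ≤ nR] ≤ K ^ (-nαγ) → 0`: if `R` is an ε-achievable threshold,
then `F(R + γ) ≤ ε`. Conversely, cutting `[0, 1)` into consecutive intervals of lengths `P(x)` and
choosing inside each one a word interval of comparable length gives a prefix-free code with
`c(φ x) ≤ -(1/α) log_K P(x) + O(1)`, so `F(R) ≤ ε` makes `R + γ` achievable. Each of the two sets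
thus lies within every `γ > 0` of the other, and their infima agree.
-/

open Filter Set Topology

section Prob

variable {X : Type*} {P : X → ℝ}

lemma prob_nonneg (hP0 : ∀ x, 0 ≤ P x) (S : Set X) : 0 ≤ prob P S :=
  tsum_nonneg fun x => indicator_nonneg (fun y _ => hP0 y) x

lemma prob_le_one (hP0 : ∀ x, 0 ≤ P x) (hP1 : HasSum P 1) (S : Set X) : prob P S ≤ 1 :=
  hP1.tsum_eq ▸ Summable.tsum_le_tsum (fun x => indicator_le_self' (fun y _ => hP0 y) x)
    (hP1.summable.indicator S) hP1.summable

lemma prob_univ (hP1 : HasSum P 1) : prob P univ = 1 := by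
  simpa [prob] using hP1.tsum_eq

lemma prob_le_prob_add_tsum (hP0 : ∀ x, 0 ≤ P x) (hP : Summable P) {g : X → ℝ}
    (hg : Summable g) (hg0 : ∀ x, 0 ≤ g x) {S T : Set X} (h : ∀ x ∈ S, x ∉ T → P x ≤ g x) :
    prob P S ≤ prob P T + ∑' x, g x := by
  rw [prob, prob, ← (hP.indicator T).tsum_add hg]
  refine Summable.tsum_le_tsum (fun x => ?_) (hP.indicator S) ((hP.indicator T).add hg)
  by_cases hS : x ∈ S <;> by_cases hT : x ∈ T <;>
    simp [hS, hT, h x, hg0 x, add_nonneg (hP0 x) (hg0 x)]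

lemma prob_mono_of_pos (hP0 : ∀ x, 0 ≤ P x) (hP : Summable P) {S T : Set X}
    (h : ∀ x ∈ S, 0 < P x → x ∈ T) : prob P S ≤ prob P T := by
  simpa using prob_le_prob_add_tsum hP0 hP summable_zero (fun _ => le_rfl)
    fun x hxS hxT => not_lt.mp fun hx => hxT (h x hxS hx)

end Prob

section Limsup

variable {X : ℕ → Type*} {P : ∀ n, X n → ℝ}

lemma isBoundedUnder_le_prob (hP0 : ∀ n x, 0 ≤ P n x) (hP1 : ∀ n, HasSum (P n) 1)
    (S : ∀ n, Set (X n)) : IsBoundedUnder (· ≤ ·) atTop fun n => prob (P n) (S n) :=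
  isBoundedUnder_of ⟨1, fun n => prob_le_one (hP0 n) (hP1 n) (S n)⟩

lemma isBoundedUnder_ge_prob (hP0 : ∀ n x, 0 ≤ P n x) (S : ∀ n, Set (X n)) :
    IsBoundedUnder (· ≥ ·) atTop fun n => prob (P n) (S n) :=
  isBoundedUnder_of ⟨0, fun n => prob_nonneg (hP0 n) (S n)⟩

lemma limsup_le_limsup_of_le_add {u v w : ℕ → ℝ} (hu : IsCoboundedUnder (· ≤ ·) atTop u)
    (hv : IsBoundedUnder (· ≤ ·) atTop v) (hv' : IsBoundedUnder (· ≥ ·) atTop v)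
    (hw : Tendsto w atTop (𝓝 0)) (h : ∀ᶠ n in atTop, u n ≤ v n + w n) :
    limsup u atTop ≤ limsup v atTop := by
  calc limsup u atTop ≤ limsup (v + w) atTop :=
        limsup_le_limsup h hu (isBoundedUnder_le_add hv hw.isBoundedUnder_le)
    _ ≤ limsup v atTop + limsup w atTop :=
        limsup_add_le hv' hv hw.isCoboundedUnder_le hw.isBoundedUnder_le
    _ = limsup v atTop := by rw [hw.limsup_eq, add_zero]

end Limsup

lemma csInf_le_csInf_of_forall_add_mem {A B : Set ℝ} (hA : BddBelow A) (hB : B.Nonempty)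
    (h : ∀ R ∈ B, ∀ γ > 0, R + γ ∈ A) : sInf A ≤ sInf B :=
  le_csInf hB fun R hR => le_of_forall_pos_le_add fun γ hγ => csInf_le hA (h R hR γ hγ)

lemma csInf_eq_csInf_of_forall_add_mem {A B : Set ℝ} (hA : BddBelow A) (hB : BddBelow B)
    (hAB : ∀ R ∈ A, ∀ γ > 0, R + γ ∈ B) (hBA : ∀ R ∈ B, ∀ γ > 0, R + γ ∈ A) :
    sInf A = sInf B := by
  rcases A.eq_empty_or_nonempty with rfl | ⟨R, hR⟩
  · rw [eq_empty_of_forall_notMem fun R hR => notMem_empty _ (hBA R hR 1 one_pos)]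
  · exact le_antisymm (csInf_le_csInf_of_forall_add_mem hA ⟨R + 1, hAB R hR 1 one_pos⟩ hBA)
      (csInf_le_csInf_of_forall_add_mem hB ⟨R, hR⟩ hAB)

section Words

variable {U : Type*} (q : U → ℝ)

def wordWeight (s : List U) : ℝ := (s.map q).prod

@[simp] lemma wordWeight_nil : wordWeight q [] = 1 := rfl

@[simp] lemma wordWeight_cons (u : U) (s : List U) :
    wordWeight q (u :: s) = q u * wordWeight q s := by
  simp [wordWeight]

lemma wordWeight_append (s t : List U) :
    wordWeight q (s ++ t) = wordWeight q s * wordWeight q t := by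
  simp [wordWeight]

variable {q}

lemma wordWeight_pos (hq : ∀ u, 0 < q u) (s : List U) : 0 < wordWeight q s :=
  List.prod_pos (by simpa using fun u _ => hq u)

lemma wordWeight_rpow_neg_mul {b : ℝ} (hb : 0 < b) (α : ℝ) (c : U → ℝ) (s : List U) :
    wordWeight (fun u => b ^ (-(α * c u))) s = b ^ (-(α * strCost c s)) := by
  induction s with
  | nil => simp [strCost]
  | cons u s ih =>
    rw [wordWeight_cons, ih, ← Real.rpow_add hb]
    simp only [strCost, List.map_cons, List.sum_cons]
    ring_nf

variable [Fintype U] [LinearOrder U] (q)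

def cumWeight (u : U) : ℝ := ∑ v ∈ Finset.univ.filter (· < u), q v

def wordStart : List U → ℝ
  | [] => 0
  | u :: s => cumWeight q u + q u * wordStart s

def wordInterval (s : List U) : Set ℝ := Ico (wordStart q s) (wordStart q s + wordWeight q s)

variable {q}

lemma cumWeight_add_eq_sum (u : U) :
    cumWeight q u + q u = ∑ v ∈ insert u (Finset.univ.filter (· < u)), q v := by
  rw [Finset.sum_insert (by simp), cumWeight, add_comm]

lemma cumWeight_nonneg (hq : ∀ u, 0 < q u) (u : U) : 0 ≤ cumWeight q u :=
  Finset.sum_nonneg fun v _ => (hq v).le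

lemma cumWeight_add_le_cumWeight (hq : ∀ u, 0 < q u) {a b : U} (hab : a < b) :
    cumWeight q a + q a ≤ cumWeight q b := by
  rw [cumWeight_add_eq_sum]
  refine Finset.sum_le_sum_of_subset_of_nonneg (fun v hv => ?_) fun v _ _ => (hq v).le
  simp only [Finset.mem_insert, Finset.mem_filter, Finset.mem_univ, true_and] at hv ⊢
  rcases hv with rfl | hv
  exacts [hab, hv.trans hab]

lemma cumWeight_add_le_one (hq : ∀ u, 0 < q u) (hq1 : ∑ u, q u = 1) (u : U) :
    cumWeight q u + q u ≤ 1 := by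
  rw [cumWeight_add_eq_sum, ← hq1]
  exact Finset.sum_le_sum_of_subset_of_nonneg (Finset.subset_univ _) fun v _ _ => (hq v).le

lemma wordStart_nonneg (hq : ∀ u, 0 < q u) (s : List U) : 0 ≤ wordStart q s := by
  induction s with
  | nil => exact le_rfl
  | cons u s ih => exact add_nonneg (cumWeight_nonneg hq u) (mul_nonneg (hq u).le ih)

lemma wordStart_add_wordWeight_le_one (hq : ∀ u, 0 < q u) (hq1 : ∑ u, q u = 1) (s : List U) :
    wordStart q s + wordWeight q s ≤ 1 := by
  induction s with
  | nil => simp [wordStart]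
  | cons u s ih =>
    have := cumWeight_add_le_one hq hq1 u
    simp only [wordStart, wordWeight_cons]
    nlinarith [hq u]

lemma wordStart_append (s t : List U) :
    wordStart q (s ++ t) = wordStart q s + wordWeight q s * wordStart q t := by
  induction s with
  | nil => simp [wordStart]
  | cons u s ih => simp only [List.cons_append, wordStart, ih, wordWeight_cons]; ring

lemma wordInterval_subset_Ico (hq : ∀ u, 0 < q u) (hq1 : ∑ u, q u = 1) (s : List U) :
    wordInterval q s ⊆ Ico 0 1 :=
  Ico_subset_Ico (wordStart_nonneg hq s) (wordStart_add_wordWeight_le_one hq hq1 s)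

lemma wordInterval_subset_of_prefix (hq : ∀ u, 0 < q u) (hq1 : ∑ u, q u = 1) {s t : List U}
    (h : s <+: t) : wordInterval q t ⊆ wordInterval q s := by
  obtain ⟨r, rfl⟩ := h
  have hs := wordWeight_pos hq s
  have hr := wordStart_nonneg hq r
  have hr1 := wordStart_add_wordWeight_le_one hq hq1 r
  refine Ico_subset_Ico ?_ ?_ <;> simp only [wordStart_append, wordWeight_append] <;> nlinarith

lemma wordStart_add_wordWeight_le_or (hq : ∀ u, 0 < q u) (hq1 : ∑ u, q u = 1) {s t : List U}
    (hst : ¬ s <+: t) (hts : ¬ t <+: s) :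
    wordStart q s + wordWeight q s ≤ wordStart q t ∨
      wordStart q t + wordWeight q t ≤ wordStart q s := by
  induction s generalizing t with
  | nil => exact absurd List.nil_prefix hst
  | cons a s ih =>
    cases t with
    | nil => exact absurd List.nil_prefix hts
    | cons b t =>
      simp only [wordStart, wordWeight_cons]
      rcases lt_trichotomy a b with hab | rfl | hab
      · have := cumWeight_add_le_cumWeight hq hab
        have := wordStart_add_wordWeight_le_one hq hq1 s
        have := wordStart_nonneg hq t
        left; nlinarith [hq a, hq b]
      · rw [List.cons_prefix_cons] at hst hts
        rcases ih (by simpa using hst) (by simpa using hts) with h | h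
        · left; nlinarith [hq a]
        · right; nlinarith [hq a]
      · have := cumWeight_add_le_cumWeight hq hab
        have := wordStart_add_wordWeight_le_one hq hq1 t
        have := wordStart_nonneg hq s
        right; nlinarith [hq a, hq b]

lemma disjoint_wordInterval (hq : ∀ u, 0 < q u) (hq1 : ∑ u, q u = 1) {s t : List U}
    (hst : ¬ s <+: t) (hts : ¬ t <+: s) : Disjoint (wordInterval q s) (wordInterval q t) := by
  rw [wordInterval, wordInterval, Ico_disjoint_Ico]
  rcases wordStart_add_wordWeight_le_or hq hq1 hst hts with h | h
  · exact le_max_of_le_right (min_le_left _ _ |>.trans h)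
  · exact le_max_of_le_left (min_le_right _ _ |>.trans h)

end Words

lemma Finset.exists_sum_filter_lt_le_lt_add {α : Type*} [LinearOrder α] (f : α → ℝ)
    (S : Finset α) {t : ℝ} (ht0 : 0 ≤ t) (ht : t < ∑ v ∈ S, f v) :
    ∃ u ∈ S, ∑ v ∈ S.filter (· < u), f v ≤ t ∧ t < ∑ v ∈ S.filter (· < u), f v + f u := by
  induction S using Finset.induction_on_max with
  | empty => simp at ht; linarith
  | insert a S hlt ih =>
    rw [Finset.sum_insert fun h => lt_irrefl a (hlt a h)] at ht
    by_cases hS : t < ∑ v ∈ S, f v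
    · obtain ⟨u, hu, h⟩ := ih hS
      refine ⟨u, Finset.mem_insert_of_mem hu, ?_⟩
      rwa [Finset.filter_insert, if_neg (hlt u hu).not_gt]
    · refine ⟨a, Finset.mem_insert_self a S, ?_⟩
      rw [Finset.filter_insert, if_neg (lt_irrefl a), Finset.filter_true_of_mem hlt]
      constructor <;> linarith

section PointLocation

variable {U : Type*} [Fintype U] [LinearOrder U] {q : U → ℝ}

lemma exists_mem_wordInterval_append (hq : ∀ u, 0 < q u) (hq1 : ∑ u, q u = 1) {m : ℝ}
    {s : List U} (hm : m ∈ wordInterval q s) : ∃ u, m ∈ wordInterval q (s ++ [u]) := by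
  have hs := wordWeight_pos hq s
  obtain ⟨hm0, hm1⟩ := hm
  obtain ⟨u, -, h0, h1⟩ := Finset.exists_sum_filter_lt_le_lt_add q Finset.univ
    (t := (m - wordStart q s) / wordWeight q s) (div_nonneg (by linarith) hs.le)
    (by rw [hq1, div_lt_one hs]; linarith)
  rw [le_div_iff₀ hs] at h0
  rw [div_lt_iff₀ hs] at h1
  refine ⟨u, ?_, ?_⟩ <;>
    simp only [wordStart_append, wordWeight_append, wordStart, wordWeight_cons, wordWeight_nil,
      cumWeight] <;> nlinarith

lemma exists_mem_wordInterval_wordWeight_le (hq : ∀ u, 0 < q u) (hq1 : ∑ u, q u = 1)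
    (hq_lt : ∀ u, q u < 1) {qmin : ℝ} (hqmin : ∀ u, qmin ≤ q u) {m t : ℝ} (hm : m ∈ Ico (0 : ℝ) 1)
    (ht : 0 < t) (ht1 : t < 1) :
    ∃ s, m ∈ wordInterval q s ∧ qmin * t < wordWeight q s ∧ wordWeight q s ≤ t := by
  have : Nonempty U := Finset.univ_nonempty_iff.mp
    (Finset.nonempty_of_sum_ne_zero (by rw [hq1]; exact one_ne_zero))
  obtain ⟨umax, humax⟩ := Finite.exists_max q
  obtain ⟨k, hk⟩ := exists_pow_lt_of_lt_one ht (hq_lt umax)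
  suffices ∀ k : ℕ, ∀ s, m ∈ wordInterval q s → t < wordWeight q s →
      wordWeight q s * q umax ^ k ≤ t →
      ∃ s', m ∈ wordInterval q s' ∧ qmin * t < wordWeight q s' ∧ wordWeight q s' ≤ t from
    this k [] (by simpa [wordInterval, wordStart] using hm) (by simpa using ht1)
      (by simpa using hk.le)
  intro k
  induction k with
  | zero => intro s _ hts hk; simp at hk; linarith
  | succ k ih =>
    intro s hms hts hk
    obtain ⟨u, hu⟩ := exists_mem_wordInterval_append hq hq1 hms
    have hsu : wordWeight q (s ++ [u]) = wordWeight q s * q u := by simp [wordWeight_append]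
    by_cases hle : wordWeight q (s ++ [u]) ≤ t
    · refine ⟨s ++ [u], hu, ?_, hle⟩
      rw [hsu]
      calc qmin * t ≤ q u * t := mul_le_mul_of_nonneg_right (hqmin u) ht.le
        _ < wordWeight q s * q u := by nlinarith [hq u]
    · refine ih (s ++ [u]) hu (not_le.mp hle) ?_
      calc wordWeight q (s ++ [u]) * q umax ^ k
          ≤ wordWeight q s * q umax * q umax ^ k := by
            rw [hsu]; gcongr
            · exact (pow_pos (hq umax) k).le
            · exact (wordWeight_pos hq s).le
            · exact humax u
        _ = wordWeight q s * q umax ^ (k + 1) := by ring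
        _ ≤ t := hk

lemma wordInterval_subset_Ico_of_mem {m t : ℝ} {s : List U} (hm : m ∈ wordInterval q s)
    (ht : wordWeight q s ≤ t) : wordInterval q s ⊆ Ico (m - t) (m + t) := by
  obtain ⟨hm0, hm1⟩ := hm
  exact Ico_subset_Ico (by linarith) (by linarith)

end PointLocation

section Codes

open MeasureTheory Function

variable {U : Type*} [Fintype U] {q : U → ℝ} {X : Type*}

lemma sum_wordWeight_le_one (hq : ∀ u, 0 < q u) (hq1 : ∑ u, q u = 1) {φ : X → List U}
    (hφ : ∀ x y, φ x <+: φ y → x = y) (S : Finset X) : ∑ x ∈ S, wordWeight q (φ x) ≤ 1 := by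
  let : LinearOrder U := LinearOrder.lift' _ (Fintype.equivFin U).injective
  have hdisj : (S : Set X).PairwiseDisjoint fun x => wordInterval q (φ x) :=
    fun x _ y _ hxy => disjoint_wordInterval hq hq1 (fun h => hxy (hφ x y h))
      (fun h => hxy (hφ y x h).symm)
  rw [← ENNReal.ofReal_le_one, ENNReal.ofReal_sum_of_nonneg fun x _ => (wordWeight_pos hq _).le]
  calc ∑ x ∈ S, ENNReal.ofReal (wordWeight q (φ x))
      = volume (⋃ x ∈ S, wordInterval q (φ x)) := by
        rw [measure_biUnion_finset hdisj fun _ _ => measurableSet_Ico]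
        simp [wordInterval, Real.volume_Ico]
    _ ≤ volume (Ico (0 : ℝ) 1) :=
        measure_mono (iUnion₂_subset fun x _ => wordInterval_subset_Ico hq hq1 _)
    _ = 1 := by simp [Real.volume_Ico]

lemma exists_pairwise_disjoint_Ico [Countable X] {w : X → ℝ} (hw0 : ∀ x, 0 ≤ w x)
    (hw : Summable w) :
    ∃ F : X → ℝ, (∀ x, 0 ≤ F x ∧ F x + w x ≤ ∑' x, w x) ∧
      Pairwise (Disjoint on fun x => Ico (F x) (F x + w x)) := by
  obtain ⟨ι, hι⟩ := Countable.exists_injective_nat X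
  set v : ℕ → ℝ := extend ι w 0
  have hvι : ∀ x, v (ι x) = w x := hι.extend_apply w 0
  have hv0 : ∀ i, 0 ≤ v i := by
    intro i
    by_cases h : ∃ x, ι x = i
    · obtain ⟨x, rfl⟩ := h
      exact (hvι x).symm ▸ hw0 x
    · simp only [v, extend_apply' _ _ _ h, Pi.zero_apply, le_rfl]
  have hv : HasSum v (∑' x, w x) := (hasSum_extend_zero hι).mpr hw.hasSum
  have hsucc : ∀ x, ∑ i ∈ Finset.range (ι x), v i + w x = ∑ i ∈ Finset.range (ι x + 1), v i :=
    fun x => by rw [Finset.sum_range_succ, hvι]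
  have hlt : ∀ x y, ι x < ι y →
      ∑ i ∈ Finset.range (ι x), v i + w x ≤ ∑ i ∈ Finset.range (ι y), v i := fun x y h => by
    rw [hsucc]
    exact Finset.sum_le_sum_of_subset_of_nonneg (Finset.range_subset_range.mpr h)
      fun i _ _ => hv0 i
  refine ⟨fun x => ∑ i ∈ Finset.range (ι x), v i,
    fun x => ⟨Finset.sum_nonneg fun i _ => hv0 i, ?_⟩, fun x y hxy => ?_⟩
  · rw [hsucc]
    exact sum_le_hasSum _ (fun i _ => hv0 i) hv
  · rcases (hι.ne hxy).lt_or_gt with h | h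
    · exact Ico_disjoint_Ico_same.mono_right (Ico_subset_Ico_left (hlt x y h))
    · exact (Ico_disjoint_Ico_same.mono_right (Ico_subset_Ico_left (hlt y x h))).symm

lemma exists_prefixFree_wordWeight_gt [Countable X] (hq : ∀ u, 0 < q u) (hq1 : ∑ u, q u = 1)
    (hq_lt : ∀ u, q u < 1) {qmin : ℝ} (hqmin : ∀ u, qmin ≤ q u) {w : X → ℝ}
    (hw : ∀ x, 0 < w x) (hws : Summable w) (hw1 : ∑' x, w x ≤ 1) :
    ∃ φ : X → List U, (∀ x y, φ x <+: φ y → x = y) ∧ (∀ x, φ x ≠ []) ∧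
      ∀ x, qmin * (w x / 2) < wordWeight q (φ x) := by
  let : LinearOrder U := LinearOrder.lift' _ (Fintype.equivFin U).injective
  obtain ⟨F, hF, hdisj⟩ := exists_pairwise_disjoint_Ico (fun x => (hw x).le) hws
  have hword : ∀ x, ∃ s, F x + w x / 2 ∈ wordInterval q s ∧
      wordInterval q s ⊆ Ico (F x) (F x + w x) ∧
      qmin * (w x / 2) < wordWeight q s ∧ wordWeight q s ≤ w x / 2 := by
    intro x
    have := hw x
    obtain ⟨hF0, hF1⟩ := hF x
    obtain ⟨s, hm, hlow, hup⟩ := exists_mem_wordInterval_wordWeight_le hq hq1 hq_lt hqmin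
      (m := F x + w x / 2) ⟨by linarith, by linarith⟩ (half_pos this) (by linarith)
    refine ⟨s, hm, ?_, hlow, hup⟩
    simpa [add_assoc] using wordInterval_subset_Ico_of_mem hm hup
  choose φ hmem hsub hlow hup using hword
  refine ⟨φ, fun x y hxy => ?_, fun x hx => ?_, hlow⟩
  · by_contra hne
    exact (hdisj hne).ne_of_mem (hsub x (wordInterval_subset_of_prefix hq hq1 hxy (hmem y)))
      (hsub y (hmem y)) rfl
  · have := hup x
    rw [hx, wordWeight_nil] at this
    linarith [hF x, hw x]

lemma exists_prefixFree_wordWeight_gt_of_hasSum [Countable X] (hq : ∀ u, 0 < q u)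
    (hq1 : ∑ u, q u = 1) (hq_lt : ∀ u, q u < 1) {qmin : ℝ} (hqmin0 : 0 ≤ qmin)
    (hqmin : ∀ u, qmin ≤ q u) {P : X → ℝ} (hP0 : ∀ x, 0 ≤ P x) (hP1 : HasSum P 1) :
    ∃ φ : X → List U, (∀ x y, φ x <+: φ y → x = y) ∧ (∀ x, φ x ≠ []) ∧
      ∀ x, qmin / 4 * P x < wordWeight q (φ x) := by
  obtain ⟨ι, hι⟩ := Countable.exists_injective_nat X
  -- Mixing in a geometric distribution makes all weights positive and at most halves them.
  set g : X → ℝ := fun x => 1 / 2 / 2 ^ ι x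
  have hg0 : ∀ x, 0 ≤ g x := fun x => by positivity
  have hg : Summable g := (summable_geometric_two' 1).comp_injective hι
  have hg1 : ∑' x, g x ≤ 1 :=
    (tsum_comp_le_tsum_of_inj (summable_geometric_two' 1) (fun _ => by positivity) hι).trans
      (tsum_geometric_two' 1).le
  obtain ⟨φ, hpre, hne, hW⟩ := exists_prefixFree_wordWeight_gt hq hq1 hq_lt hqmin
    (w := fun x => (P x + g x) / 2) (fun x => by have := hP0 x; have := hg0 x; positivity)
    ((hP1.summable.add hg).div_const 2)
    (by rw [tsum_div_const, hP1.summable.tsum_add hg, hP1.tsum_eq]; linarith)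
  refine ⟨φ, hpre, hne, fun x => lt_of_le_of_lt ?_ (hW x)⟩
  nlinarith [mul_nonneg hqmin0 (hg0 x)]

end Codes

section Rates

variable {U : Type*} {K α : ℝ} {c : U → ℝ}

lemma le_one_div_mul_logb_inv_iff {b p m R : ℝ} (hb : 1 < b) (hp : 0 < p) (hm : 0 < m) :
    R ≤ 1 / m * Real.logb b p⁻¹ ↔ p ≤ b ^ (-(m * R)) := by
  rw [one_div_mul_eq_div, le_div_iff₀ hm, Real.logb_inv, ← Real.logb_le_iff_le_rpow hb hp]
  constructor <;> intro h <;> linarith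

lemma mul_lt_strCost_iff (hK : 1 < K) (hα : 0 < α) (m R : ℝ) (s : List U) :
    m * R < strCost c s ↔ wordWeight (fun u => K ^ (-(α * c u))) s < K ^ (-(m * α * R)) := by
  rw [wordWeight_rpow_neg_mul (by linarith), Real.rpow_lt_rpow_left_iff hK, neg_lt_neg_iff,
    mul_comm m α, mul_assoc, mul_lt_mul_iff_right₀ hα]

lemma rpow_neg_mul_add {b : ℝ} (hb : 0 < b) (n : ℕ) (α R γ : ℝ) :
    b ^ (-(n * α * (R + γ))) = b ^ (-(n * α * R)) * (b ^ (-(α * γ))) ^ n := by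
  rw [← Real.rpow_natCast, ← Real.rpow_mul hb.le, ← Real.rpow_add hb]
  ring_nf

variable {X : ℕ → Type*} {P : ∀ n, X n → ℝ}

lemma pos_of_limsup_spectrum_lt_one (hK : 1 < K) (hα : 0 < α) (hP0 : ∀ n x, 0 ≤ P n x)
    (hP1 : ∀ n, HasSum (P n) 1) {R : ℝ}
    (h : limsup (fun n => prob (P n) {x | R ≤ 1 / ((n : ℝ) * α) * Real.logb K (P n x)⁻¹})
      atTop < 1) : 0 < R := by
  by_contra! hR
  refine h.not_ge (le_limsup_of_frequently_le (Frequently.of_forall fun n => ?_)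
    (isBoundedUnder_le_prob hP0 hP1 _))
  refine (prob_univ (hP1 n)).ge.trans
    (prob_mono_of_pos (hP0 n) (hP1 n).summable fun x _ hPx => hR.trans ?_)
  have hP_le : P n x ≤ 1 := le_hasSum (hP1 n) x fun y _ => hP0 n y
  exact mul_nonneg (one_div_nonneg.mpr (mul_nonneg n.cast_nonneg hα.le))
    (Real.logb_nonneg hK ((one_le_inv₀ hPx).mpr hP_le))

lemma limsup_spectrum_le_limsup_overflow [Fintype U] (hK : 1 < K) (hα : 0 < α)
    (hroot : ∑ u, K ^ (-(α * c u)) = 1) (hP0 : ∀ n x, 0 ≤ P n x) (hP1 : ∀ n, HasSum (P n) 1)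
    {φ : ∀ n, X n → List U} (hφ : ∀ n x y, φ n x <+: φ n y → x = y) (R : ℝ) {γ : ℝ}
    (hγ : 0 < γ) :
    limsup (fun n => prob (P n) {x | R + γ ≤ 1 / ((n : ℝ) * α) * Real.logb K (P n x)⁻¹})
        atTop ≤
      limsup (fun n => prob (P n) {x | (n : ℝ) * R < strCost c (φ n x)}) atTop := by
  set q : U → ℝ := fun u => K ^ (-(α * c u))
  have hK0 : 0 < K := by linarith
  have hq : ∀ u, 0 < q u := fun u => Real.rpow_pos_of_pos hK0 _
  set ρ := K ^ (-(α * γ))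
  have hρ0 : 0 ≤ ρ := (Real.rpow_pos_of_pos hK0 _).le
  have hρ1 : ρ < 1 := Real.rpow_lt_one_of_one_lt_of_neg hK (by nlinarith)
  refine limsup_le_limsup_of_le_add (isBoundedUnder_ge_prob hP0 _).isCoboundedUnder_le
    (isBoundedUnder_le_prob hP0 hP1 _) (isBoundedUnder_ge_prob hP0 _)
    (tendsto_pow_atTop_nhds_zero_of_lt_one hρ0 hρ1) ?_
  filter_upwards [eventually_ge_atTop 1] with n hn
  have hkraft := sum_wordWeight_le_one hq hroot (hφ n)
  have hsum : Summable fun x => wordWeight q (φ n x) :=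
    summable_of_sum_le (fun x => (wordWeight_pos hq _).le) hkraft
  -- On the event, `P n x ≤ K ^ (-(n α R)) ρ ^ n ≤ wordWeight q (φ n x) ρ ^ n`; sum by Kraft.
  calc _ ≤ prob (P n) {x | (n : ℝ) * R < strCost c (φ n x)} +
        ∑' x, wordWeight q (φ n x) * ρ ^ n := by
        refine prob_le_prob_add_tsum (hP0 n) (hP1 n).summable (hsum.mul_right _)
          (fun x => mul_nonneg (wordWeight_pos hq _).le (pow_nonneg hρ0 n)) fun x hxS hxT => ?_
        rcases (hP0 n x).eq_or_lt with h0 | hPx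
        · rw [← h0]
          exact mul_nonneg (wordWeight_pos hq _).le (pow_nonneg hρ0 n)
        have hn0 : (0 : ℝ) < n := by exact_mod_cast hn
        rw [mem_ofPred_eq, le_one_div_mul_logb_inv_iff hK hPx (by positivity),
          rpow_neg_mul_add hK0] at hxS
        rw [mem_ofPred_eq, mul_lt_strCost_iff hK hα, not_lt] at hxT
        exact hxS.trans (by gcongr)
    _ ≤ _ := by
        rw [tsum_mul_right]
        gcongr
        exact mul_le_of_le_one_left (pow_nonneg hρ0 n) (tsum_le_of_sum_le' zero_le_one hkraft)

lemma exists_code_limsup_overflow_le [Fintype U] [∀ n, Countable (X n)] (hK : 1 < K) (hα : 0 < α)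
    (hc : ∀ u, 0 < c u) (hroot : ∑ u, K ^ (-(α * c u)) = 1) (hP0 : ∀ n x, 0 ≤ P n x)
    (hP1 : ∀ n, HasSum (P n) 1) :
    ∃ φ : ∀ n, X n → List U, (∀ n x y, φ n x <+: φ n y → x = y) ∧ (∀ n x, φ n x ≠ []) ∧
      ∀ R γ, 0 < γ →
        limsup (fun n => prob (P n) {x | (n : ℝ) * (R + γ) < strCost c (φ n x)}) atTop ≤
          limsup (fun n => prob (P n) {x | R ≤ 1 / ((n : ℝ) * α) * Real.logb K (P n x)⁻¹})
            atTop := by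
  set q : U → ℝ := fun u => K ^ (-(α * c u))
  have hK0 : 0 < K := by linarith
  have hq : ∀ u, 0 < q u := fun u => Real.rpow_pos_of_pos hK0 _
  have hq_lt : ∀ u, q u < 1 := fun u => Real.rpow_lt_one_of_one_lt_of_neg hK (by nlinarith [hc u])
  have : Nonempty U := Finset.univ_nonempty_iff.mp
    (Finset.nonempty_of_sum_ne_zero (by rw [hroot]; exact one_ne_zero))
  obtain ⟨u₀, hu₀⟩ := Finite.exists_min q
  set δ := q u₀ / 4
  have hδ : 0 < δ := div_pos (hq u₀) four_pos
  choose φ hpre hne hW using fun n =>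
    exists_prefixFree_wordWeight_gt_of_hasSum hq hroot hq_lt (hq u₀).le hu₀ (hP0 n) (hP1 n)
  refine ⟨φ, hpre, hne, fun R γ hγ => ?_⟩
  have hρ1 : K ^ (-(α * γ)) < 1 := Real.rpow_lt_one_of_one_lt_of_neg hK (by nlinarith)
  have hsmall : ∀ᶠ n : ℕ in atTop, (K ^ (-(α * γ))) ^ n < δ :=
    (tendsto_pow_atTop_nhds_zero_of_lt_one (Real.rpow_pos_of_pos hK0 _).le hρ1).eventually_lt_const
      hδ
  refine limsup_le_limsup ?_ (isBoundedUnder_ge_prob hP0 _).isCoboundedUnder_le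
    (isBoundedUnder_le_prob hP0 hP1 _)
  filter_upwards [hsmall, eventually_ge_atTop 1] with n hn hn1
  refine prob_mono_of_pos (hP0 n) (hP1 n).summable fun x hx hPx => ?_
  have hn0 : (0 : ℝ) < n := by exact_mod_cast hn1
  rw [mem_ofPred_eq, mul_lt_strCost_iff hK hα, mul_assoc, ← mul_assoc _ α, rpow_neg_mul_add hK0]
    at hx
  rw [mem_ofPred_eq, le_one_div_mul_logb_inv_iff hK hPx (by positivity)]
  have : δ * P n x < δ * K ^ (-(n * α * R)) := by
    calc δ * P n x < wordWeight q (φ n x) := hW n x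
      _ < K ^ (-(n * α * R)) * (K ^ (-(α * γ))) ^ n := hx
      _ ≤ δ * K ^ (-(n * α * R)) := by
        rw [mul_comm δ]; gcongr
  exact (lt_of_mul_lt_mul_left this hδ.le).le

end Rates

theorem first_order_overflow_threshold_general {U : Type*} [Fintype U] (K : ℕ) (hK : 2 ≤ K)
    (c : U → ℝ) (hc : ∀ u, 0 < c u)
    (α : ℝ) (hα : 0 < α) (hroot : ∑ u : U, (K : ℝ) ^ (-(α * c u)) = 1)
    (𝒳 : ℕ → Type) [∀ n, Countable (𝒳 n)]
    (P : ∀ n, 𝒳 n → ℝ) (hP0 : ∀ n x, 0 ≤ P n x) (hP1 : ∀ n, HasSum (P n) 1)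
    (ε : ℝ) (hε1 : ε < 1) :
    sInf {R : ℝ | 0 < R ∧ ∃ φ : ∀ n, 𝒳 n → List U,
        (∀ n, Function.Injective (φ n)) ∧ (∀ n x, φ n x ≠ []) ∧
        (∀ n x y, φ n x <+: φ n y → φ n x = φ n y) ∧
        Filter.limsup (fun n => prob (P n) {x | (n : ℝ) * R < strCost c (φ n x)})
          Filter.atTop ≤ ε}
      = sInf {R : ℝ |
          Filter.limsup
            (fun n => prob (P n)
              {x | R ≤ 1 / ((n : ℝ) * α) * Real.logb K (P n x)⁻¹})
            Filter.atTop ≤ ε} := by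
  have hK1 : (1 : ℝ) < K := by exact_mod_cast hK
  have hpos : ∀ R, limsup (fun n => prob (P n)
      {x | R ≤ 1 / ((n : ℝ) * α) * Real.logb K (P n x)⁻¹}) atTop ≤ ε → 0 < R :=
    fun R hR => pos_of_limsup_spectrum_lt_one hK1 hα hP0 hP1 (hR.trans_lt hε1)
  obtain ⟨φ, hφ, hφ_ne, hφ_le⟩ := exists_code_limsup_overflow_le hK1 hα hc hroot hP0 hP1
  refine csInf_eq_csInf_of_forall_add_mem ⟨0, fun R hR => hR.1.le⟩
    ⟨0, fun R hR => (hpos R hR).le⟩ ?_ ?_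
  · rintro R ⟨-, ψ, hψ_inj, -, hψ, hR⟩ γ hγ
    exact (limsup_spectrum_le_limsup_overflow hK1 hα hroot hP0 hP1
      (fun n x y h => hψ_inj n (hψ n x y h)) R hγ).trans hR
  · intro R hR γ hγ
    exact ⟨add_pos (hpos R hR) hγ, φ, fun n x y h => hφ n x y (h ▸ List.prefix_refl _), hφ_ne,
      fun n x y h => congrArg (φ n) (hφ n x y h), (hφ_le R γ hγ).trans hR⟩

/-- General formula for the infimum of ε-achievable (first-order) overflow thresholds:
`R(ε|X) = inf { R : F(R) ≤ ε }`. -/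
theorem first_order_overflow_threshold {U : Type*} [Fintype U] (K : ℕ) (hK : 2 ≤ K)
    (hcard : Fintype.card U = K) (c : U → ℝ) (hc : ∀ u, 0 < c u)
    (α : ℝ) (hα : 0 < α) (hroot : ∑ u : U, (K : ℝ) ^ (-(α * c u)) = 1)
    (𝒳 : ℕ → Type) [∀ n, Countable (𝒳 n)]
    (P : ∀ n, 𝒳 n → ℝ) (hP0 : ∀ n x, 0 ≤ P n x) (hP1 : ∀ n, HasSum (P n) 1)
    (ε : ℝ) (hε0 : 0 ≤ ε) (hε1 : ε < 1) :
    sInf {R : ℝ | 0 < R ∧ ∃ φ : ∀ n, 𝒳 n → List U,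
        (∀ n, Function.Injective (φ n)) ∧ (∀ n x, φ n x ≠ []) ∧
        (∀ n x y, φ n x <+: φ n y → φ n x = φ n y) ∧
        Filter.limsup (fun n => prob (P n) {x | (n : ℝ) * R < strCost c (φ n x)})
          Filter.atTop ≤ ε}
      = sInf {R : ℝ |
          Filter.limsup
            (fun n => prob (P n)
              {x | R ≤ 1 / ((n : ℝ) * α) * Real.logb K (P n x)⁻¹})
            Filter.atTop ≤ ε} :=
  first_order_overflow_threshold_general K hK c hc α hα hroot 𝒳 P hP0 hP1 ε hε1
end
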